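/- arXiv:2603.03173 — 5 statements merged into one kernel-verified Lean document; each statement's English description precedes it below -/
import Mathlib

section
/- For any vector v in R^n, the inner product v·(σ(v) − σ(−v)) is nonnegative, where σ is the softmax mapping; moreover, equality holds if and only if v = c·1_n for some real constant c. -/
noncomputable def softmax {n : ℕ} (v : Fin n → ℝ) : Fin n → ℝ :=
  fun i => Real.exp (v i) / ∑ j, Real.exp (v j)

/-!
With `S = ∑ exp (v j)` and `T = ∑ exp (-v j)`, clearing denominators gives
`S * T * (v ⬝ (σ v - σ (-v))) = ∑ i j, (v i - v j) * exp (v i - v j)`. Symmetrizing in `(i, j)`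
turns this into `∑ i j, (v i - v j) * sinh (v i - v j)`, a sum of terms `x * sinh x ≥ 0`
that vanish only at `x = 0`.
-/

open Finset Real

lemma Real.self_mul_sinh_nonneg (x : ℝ) : 0 ≤ x * sinh x := by
  rcases le_total 0 x with hx | hx
  · exact mul_nonneg hx (sinh_nonneg_iff.2 hx)
  · exact mul_nonneg_of_nonpos_of_nonpos hx (sinh_nonpos_iff.2 hx)

lemma Real.self_mul_sinh_eq_zero {x : ℝ} : x * sinh x = 0 ↔ x = 0 := by
  rw [mul_eq_zero, sinh_eq_zero, or_self]

lemma Function.exists_eq_const_iff {α β : Type*} [Nonempty β] {f : α → β} :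
    (∃ c, f = fun _ => c) ↔ ∀ i j, f i = f j := by
  refine ⟨fun ⟨c, hc⟩ i j => by rw [hc], fun h => ?_⟩
  rcases isEmpty_or_nonempty α with hα | ⟨⟨i⟩⟩
  · exact ⟨Classical.arbitrary β, funext isEmptyElim⟩
  · exact ⟨f i, funext fun j => h j i⟩

section
variable {ι : Type*} [Fintype ι]

lemma sum_sum_sub_mul_mul (a x y : ι → ℝ) :
    ∑ i, ∑ j, (a i - a j) * (x i * y j) =
      (∑ i, a i * x i) * ∑ j, y j - (∑ i, a i * y i) * ∑ j, x j := by
  simp only [sub_mul, sum_sub_distrib]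
  rw [sum_mul_sum, sum_mul_sum, sum_comm (f := fun i j => a j * (x i * y j))]
  congr 1 <;> exact sum_congr rfl fun _ _ => sum_congr rfl fun _ _ => by ring

lemma sum_sum_sub_mul_sinh_eq_sum_sum_sub_mul_exp (a : ι → ℝ) :
    ∑ i, ∑ j, (a i - a j) * sinh (a i - a j) = ∑ i, ∑ j, (a i - a j) * exp (a i - a j) := by
  have hsym : ∀ i j, (a i - a j) * sinh (a i - a j) =
      ((a i - a j) * exp (a i - a j) + (a j - a i) * exp (a j - a i)) / 2 := fun i j => by
    rw [sinh_eq, neg_sub]; ring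
  simp only [hsym, ← sum_div, sum_add_distrib]
  rw [sum_comm (f := fun i j => (a j - a i) * exp (a j - a i))]
  ring

lemma sum_sum_sub_mul_sinh_eq_zero_iff (a : ι → ℝ) :
    ∑ i, ∑ j, (a i - a j) * sinh (a i - a j) = 0 ↔ ∀ i j, a i = a j := by
  simp only [sum_eq_zero_iff_of_nonneg fun _ _ => sum_nonneg fun _ _ => self_mul_sinh_nonneg _,
    sum_eq_zero_iff_of_nonneg fun _ _ => self_mul_sinh_nonneg _, self_mul_sinh_eq_zero,
    sub_eq_zero, mem_univ, true_implies]

end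

lemma softmax_mul_sum_exp {n : ℕ} (v : Fin n → ℝ) (i : Fin n) :
    softmax v i * ∑ j, exp (v j) = exp (v i) :=
  div_mul_cancel₀ _ (sum_pos (fun j _ => exp_pos (v j)) ⟨i, mem_univ i⟩).ne'

lemma sum_exp_mul_sum_exp_neg_mul_sum_mul_softmax_sub {n : ℕ} (v : Fin n → ℝ) :
    (∑ j, exp (v j)) * (∑ j, exp (-v j)) * ∑ i, v i * (softmax v i - softmax (-v) i) =
      ∑ i, ∑ j, (v i - v j) * exp (v i - v j) := by
  have hexp : ∀ i j, exp (v i - v j) = exp (v i) * exp (-v j) := fun i j => by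
    rw [sub_eq_add_neg, exp_add]
  have h₁ := softmax_mul_sum_exp v
  have h₂ : ∀ i, softmax (-v) i * ∑ j, exp (-v j) = exp (-v i) := softmax_mul_sum_exp (-v)
  simp only [hexp, sum_sum_sub_mul_mul]
  generalize ∑ j, exp (v j) = S at h₁ ⊢
  generalize ∑ j, exp (-v j) = T at h₂ ⊢
  rw [mul_sum, sum_mul, sum_mul, ← sum_sub_distrib]
  refine sum_congr rfl fun i _ => ?_
  linear_combination (v i * T) * h₁ i - (v i * S) * h₂ i

theorem softmax_monotone_odd (n : ℕ) (v : Fin n → ℝ) :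
    0 ≤ ∑ i, v i * (softmax v i - softmax (-v) i) ∧
    ((∑ i, v i * (softmax v i - softmax (-v) i)) = 0 ↔ ∃ c : ℝ, v = fun _ => c) := by
  rcases isEmpty_or_nonempty (Fin n) with hn | hn
  · simp [Function.exists_eq_const_iff]
  have hpos : 0 < (∑ j, exp (v j)) * ∑ j, exp (-v j) :=
    mul_pos (sum_pos (fun j _ => exp_pos _) univ_nonempty)
      (sum_pos (fun j _ => exp_pos _) univ_nonempty)
  have key : (∑ j, exp (v j)) * (∑ j, exp (-v j)) * ∑ i, v i * (softmax v i - softmax (-v) i) =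
      ∑ i, ∑ j, (v i - v j) * sinh (v i - v j) := by
    rw [sum_sum_sub_mul_sinh_eq_sum_sum_sub_mul_exp,
      sum_exp_mul_sum_exp_neg_mul_sum_mul_softmax_sub]
  constructor
  · refine nonneg_of_mul_nonneg_right ?_ hpos
    rw [key]
    exact sum_nonneg fun i _ => sum_nonneg fun j _ => self_mul_sinh_nonneg _
  · rw [← mul_eq_zero_iff_left hpos.ne', key, sum_sum_sub_mul_sinh_eq_zero_iff,
      Function.exists_eq_const_iff]
end

section
/- For any v in R^n, v·(σ(v) − σ(−v)) = (2/(Z_1 Z_2)) Σ_{1≤j<i≤n} (v_i − v_j) sinh(v_i − v_j), where Z_1 = Σ_j exp(v_j) and Z_2 = Σ_j exp(−v_j). -/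
/-!
Over the common denominator `Z₁ Z₂`, the `i`-th coordinate of `σ(v) - σ(-v)` is
`Σⱼ (e^{vᵢ - vⱼ} - e^{vⱼ - vᵢ}) = 2 Σⱼ sinh (vᵢ - vⱼ)`. Pairing the terms `(i, j)` and `(j, i)`
of `Σᵢ Σⱼ vᵢ sinh (vᵢ - vⱼ)` and using that `sinh` is odd gives `(vᵢ - vⱼ) sinh (vᵢ - vⱼ)`.
-/

open Finset Real

theorem Finset.sum_sum_eq_sum_sum_lt_add {ι M : Type*} [Fintype ι] [LinearOrder ι]
    [AddCommMonoid M] (F : ι → ι → M) (hF : ∀ i, F i i = 0) :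
    ∑ i, ∑ j, F i j = ∑ i, ∑ j ∈ univ.filter (· < i), (F i j + F j i) := by
  have hswap : ∑ i, ∑ j ∈ univ.filter (· < i), F j i
      = ∑ i, ∑ j ∈ univ.filter (i < ·), F i j := by
    simp only [sum_filter]
    exact sum_comm
  have hsplit (i j : ι) : F i j = (if j < i then F i j else 0) + if i < j then F i j else 0 := by
    rcases lt_trichotomy j i with h | rfl | h
    · simp [h, h.not_gt]
    · simp [hF]
    · simp [h, h.not_gt]
  calc ∑ i, ∑ j, F i j
      = ∑ i, ∑ j, ((if j < i then F i j else 0) + if i < j then F i j else 0) :=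
        sum_congr rfl fun i _ => sum_congr rfl fun j _ => hsplit i j
    _ = ∑ i, ∑ j ∈ univ.filter (· < i), F i j + ∑ i, ∑ j ∈ univ.filter (i < ·), F i j := by
        simp only [sum_add_distrib, sum_filter]
    _ = ∑ i, ∑ j ∈ univ.filter (· < i), (F i j + F j i) := by
        simp only [← hswap, ← sum_add_distrib]

theorem softmax_sub_softmax_neg {n : ℕ} (v : Fin n → ℝ) (i : Fin n) :
    softmax v i - softmax (-v) i
      = 2 / ((∑ j, exp (v j)) * ∑ j, exp (-v j)) * ∑ j, sinh (v i - v j) := by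
  have : Nonempty (Fin n) := ⟨i⟩
  have hZ₁ : (∑ j, exp (v j)) ≠ 0 := (sum_pos (fun j _ => exp_pos _) univ_nonempty).ne'
  have hZ₂ : (∑ j, exp (-v j)) ≠ 0 := (sum_pos (fun j _ => exp_pos _) univ_nonempty).ne'
  have hnum : exp (v i) * (∑ j, exp (-v j)) - (∑ j, exp (v j)) * exp (-v i)
      = 2 * ∑ j, sinh (v i - v j) := by
    simp only [mul_sum, sum_mul, ← sum_sub_distrib, sinh_eq, ← exp_add, neg_sub]
    exact sum_congr rfl fun j _ => by ring_nf
  simp only [softmax, Pi.neg_apply]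
  rw [div_sub_div _ _ hZ₁ hZ₂, hnum]
  ring

theorem softmax_sinh_identity (n : ℕ) (v : Fin n → ℝ) :
    ∑ i, v i * (softmax v i - softmax (-v) i) =
      (2 / ((∑ j, Real.exp (v j)) * (∑ j, Real.exp (-v j)))) *
        ∑ i, ∑ j ∈ Finset.univ.filter (fun j => j < i),
          (v i - v j) * Real.sinh (v i - v j) := by
  have hpair : ∑ i, ∑ j, v i * sinh (v i - v j)
      = ∑ i, ∑ j ∈ univ.filter (· < i), (v i - v j) * sinh (v i - v j) := by
    rw [sum_sum_eq_sum_sum_lt_add _ fun i => by simp]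
    refine sum_congr rfl fun i _ => sum_congr rfl fun j _ => ?_
    rw [← neg_sub (v i), sinh_neg]
    ring
  simp only [softmax_sub_softmax_neg, ← hpair, mul_sum]
  refine sum_congr rfl fun i _ => sum_congr rfl fun j _ => ?_
  ring
end

section
/- The softmax mapping σ: R^n → R^n is (1/2)-Lipschitz with respect to the Euclidean norm: for all u, v in R^n, ‖σ(u+v) − σ(u)‖₂ ≤ (1/2)‖v‖₂. -/
noncomputable def softmaxE {n : ℕ} (v : EuclideanSpace ℝ (Fin n)) : EuclideanSpace ℝ (Fin n) :=
  WithLp.toLp 2 (fun i => Real.exp (v i) / ∑ j, Real.exp (v j))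

/-!
At `z` the Jacobian of softmax is `J = diag p - p pᵀ` with `p = σ(z)`, a symmetric operator whose
quadratic form `⟪J x, x⟫ = ∑ pᵢ xᵢ² - (∑ pᵢ xᵢ)²` is the variance of `x` under the probability
vector `p`. This variance is nonnegative (Jensen), and by Popoviciu's inequality it is at most
`((max x - min x) / 2)² ≤ (max x² + min x²) / 2 ≤ ‖x‖² / 2`. Hence `‖J‖ ≤ 1/2`, and the mean
value inequality gives the Lipschitz bound.
-/

open Finset

namespace ContinuousLinearMap

variable {𝕜 E : Type*} [RCLike 𝕜] [NormedAddCommGroup E] [InnerProductSpace 𝕜 E]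

theorem opNorm_le_of_abs_re_inner_self_le {T : E →L[𝕜] E} (hT : T.IsSymmetric) {C : ℝ}
    (hC : 0 ≤ C) (h : ∀ x, |RCLike.re (inner 𝕜 (T x) x)| ≤ C * ‖x‖ ^ 2) : ‖T‖ ≤ C := by
  rw [T.norm_eq_iSup_rayleighQuotient hT]
  refine ciSup_le fun x => ?_
  rw [rayleighQuotient, reApplyInnerSelf_apply, abs_div, abs_sq]
  exact div_le_of_le_mul₀ (sq_nonneg _) hC (h x)

end ContinuousLinearMap

section WeightedVariance

variable {ι : Type*} [Fintype ι] {p : ι → ℝ}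

theorem sq_sum_mul_le_sum_mul_sq (hp : ∀ i, 0 ≤ p i) (hs : ∑ i, p i = 1) (x : ι → ℝ) :
    (∑ i, p i * x i) ^ 2 ≤ ∑ i, p i * x i ^ 2 :=
  (even_two.convexOn_pow (𝕜 := ℝ)).map_sum_le (fun i _ => hp i) hs fun i _ => Set.mem_univ (x i)

/-- Popoviciu's inequality for finitely supported weights. -/
theorem sum_mul_sq_sub_sq_le_of_mem_Icc (hp : ∀ i, 0 ≤ p i) (hs : ∑ i, p i = 1) {x : ι → ℝ}
    {a b : ℝ} (hx : ∀ i, x i ∈ Set.Icc a b) :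
    ∑ i, p i * x i ^ 2 - (∑ i, p i * x i) ^ 2 ≤ ((b - a) / 2) ^ 2 := by
  have hnonneg : 0 ≤ ∑ i, p i * ((b - x i) * (x i - a)) := sum_nonneg fun i _ =>
    mul_nonneg (hp i) (mul_nonneg (sub_nonneg.2 (hx i).2) (sub_nonneg.2 (hx i).1))
  have hexpand : ∑ i, p i * ((b - x i) * (x i - a)) =
      (a + b) * ∑ i, p i * x i - a * b * ∑ i, p i - ∑ i, p i * x i ^ 2 := by
    rw [mul_sum, mul_sum, ← sum_sub_distrib, ← sum_sub_distrib]
    exact sum_congr rfl fun i _ => by ring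
  rw [hexpand, hs] at hnonneg
  nlinarith [sq_nonneg (∑ i, p i * x i - (a + b) / 2)]

theorem sum_mul_sq_sub_sq_le_half_sum_sq (hp : ∀ i, 0 ≤ p i) (hs : ∑ i, p i = 1) (x : ι → ℝ) :
    ∑ i, p i * x i ^ 2 - (∑ i, p i * x i) ^ 2 ≤ 1 / 2 * ∑ i, x i ^ 2 := by
  classical
  have : Nonempty ι := by
    by_contra h
    rw [not_nonempty_iff] at h
    simp at hs
  obtain ⟨imax, -, hmax⟩ := exists_max_image univ x univ_nonempty
  obtain ⟨imin, -, hmin⟩ := exists_min_image univ x univ_nonempty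
  grw [sum_mul_sq_sub_sq_le_of_mem_Icc hp hs fun i => ⟨hmin i (mem_univ i), hmax i (mem_univ i)⟩]
  obtain h | h := eq_or_ne imax imin
  · rw [h, sub_self, zero_div, zero_pow two_ne_zero]
    positivity
  · have hpair : x imax ^ 2 + x imin ^ 2 ≤ ∑ i, x i ^ 2 :=
      calc x imax ^ 2 + x imin ^ 2 = ∑ i ∈ {imax, imin}, x i ^ 2 :=
            (sum_pair (f := (x · ^ 2)) h).symm
        _ ≤ ∑ i, x i ^ 2 :=
            sum_le_sum_of_subset_of_nonneg (subset_univ _) fun i _ _ => sq_nonneg (x i)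
    nlinarith [sq_nonneg (x imax + x imin)]

end WeightedVariance

section Jacobian

variable {ι : Type*} [Fintype ι]

/-- The operator `diag p - p pᵀ`. -/
noncomputable def softmaxJacobian (p : ι → ℝ) :
    EuclideanSpace ℝ ι →L[ℝ] EuclideanSpace ℝ ι :=
  (PiLp.continuousLinearEquiv 2 ℝ fun _ : ι => ℝ).symm.toContinuousLinearMap ∘L
    ContinuousLinearMap.pi fun i =>
      p i • (EuclideanSpace.proj i - ∑ j, p j • EuclideanSpace.proj j)

theorem softmaxJacobian_apply (p : ι → ℝ) (x : EuclideanSpace ℝ ι) (i : ι) :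
    softmaxJacobian p x i = p i * (x i - ∑ j, p j * x j) := by
  simp [softmaxJacobian]

theorem inner_softmaxJacobian_apply (p : ι → ℝ) (x y : EuclideanSpace ℝ ι) :
    inner ℝ (softmaxJacobian p x) y =
      ∑ i, p i * x i * y i - (∑ i, p i * x i) * ∑ i, p i * y i := by
  simp only [PiLp.inner_apply, softmaxJacobian_apply, Real.inner_apply]
  rw [mul_comm (∑ i, p i * x i), sum_mul, ← sum_sub_distrib]
  exact sum_congr rfl fun i _ => by ring

theorem softmaxJacobian_isSymmetric (p : ι → ℝ) : (softmaxJacobian p).IsSymmetric := by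
  intro x y
  rw [ContinuousLinearMap.coe_coe, real_inner_comm _ x, inner_softmaxJacobian_apply,
    inner_softmaxJacobian_apply, mul_comm (∑ i, p i * x i)]
  exact congrArg (· - _) (sum_congr rfl fun i _ => by ring)

theorem norm_softmaxJacobian_le (p : ι → ℝ) (hp : ∀ i, 0 ≤ p i) (hs : ∑ i, p i = 1) :
    ‖softmaxJacobian p‖ ≤ 1 / 2 := by
  refine ContinuousLinearMap.opNorm_le_of_abs_re_inner_self_le (softmaxJacobian_isSymmetric p)
    (by norm_num) fun x => ?_
  rw [RCLike.re_to_real, inner_softmaxJacobian_apply, EuclideanSpace.real_norm_sq_eq]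
  simp only [mul_assoc, ← pow_two]
  have hvar_nonneg := sub_nonneg.2 (sq_sum_mul_le_sum_mul_sq hp hs x)
  exact abs_le.2 ⟨(neg_nonpos.2 (by positivity)).trans hvar_nonneg,
    sum_mul_sq_sub_sq_le_half_sum_sq hp hs x⟩

end Jacobian

section Softmax

open Real

variable {n : ℕ}

theorem softmaxE_apply (z : EuclideanSpace ℝ (Fin n)) (i : Fin n) :
    softmaxE z i = exp (z i) / ∑ j, exp (z j) := rfl

theorem softmaxE_nonneg (z : EuclideanSpace ℝ (Fin n)) (i : Fin n) : 0 ≤ softmaxE z i := by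
  rw [softmaxE_apply]; positivity

theorem sum_softmaxE [NeZero n] (z : EuclideanSpace ℝ (Fin n)) : ∑ i, softmaxE z i = 1 := by
  simp_rw [softmaxE_apply, ← sum_div]
  exact div_self (sum_pos (fun j _ => exp_pos _) univ_nonempty).ne'

theorem hasFDerivAt_softmaxE (z : EuclideanSpace ℝ (Fin n)) :
    HasFDerivAt softmaxE (softmaxJacobian (softmaxE z)) z := by
  rw [← hasFDerivWithinAt_univ, hasFDerivWithinAt_piLp]
  intro i
  have hS (w : EuclideanSpace ℝ (Fin n)) : 0 < ∑ j, exp (w j) :=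
    sum_pos (fun j _ => exp_pos _) ⟨i, mem_univ i⟩
  have hproj (j : Fin n) : HasFDerivAt (fun w : EuclideanSpace ℝ (Fin n) => w j)
      (PiLp.proj (𝕜 := ℝ) 2 (fun _ : Fin n => ℝ) j) z :=
    (PiLp.hasStrictFDerivAt_apply 2 z j).hasFDerivAt
  have hlog : HasFDerivAt (fun w : EuclideanSpace ℝ (Fin n) => log (∑ j, exp (w j)))
      (∑ j, softmaxE z j • PiLp.proj (𝕜 := ℝ) 2 (fun _ : Fin n => ℝ) j) z := by
    refine ((HasFDerivAt.fun_sum fun j _ => (hproj j).exp).log (hS z).ne').congr_fderiv ?_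
    simp_rw [smul_sum, smul_smul, softmaxE_apply, div_eq_inv_mul]
  -- `σᵢ = exp (zᵢ - log ∑ⱼ exp zⱼ)` makes the derivative come out as `pᵢ (dzᵢ - ∑ⱼ pⱼ dzⱼ)`.
  have hfun : (fun w => softmaxE w i) = fun w => exp (w i - log (∑ j, exp (w j))) := by
    funext w
    rw [exp_sub, exp_log (hS w), softmaxE_apply]
  rw [hfun]
  refine (((hproj i).sub hlog).exp.congr_fderiv ?_).hasFDerivWithinAt
  ext x
  simp [softmaxJacobian_apply, ← congrFun hfun z]

theorem norm_softmaxJacobian_softmaxE_le (z : EuclideanSpace ℝ (Fin n)) :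
    ‖softmaxJacobian (softmaxE z)‖ ≤ 1 / 2 := by
  obtain rfl | hn := n.eq_zero_or_pos
  · simp [norm_of_subsingleton]
  · have : NeZero n := ⟨hn.ne'⟩
    exact norm_softmaxJacobian_le _ (softmaxE_nonneg z) (sum_softmaxE z)

end Softmax

theorem softmax_lipschitz (n : ℕ) (u v : EuclideanSpace ℝ (Fin n)) :
    ‖softmaxE (u + v) - softmaxE u‖ ≤ (1 / 2) * ‖v‖ := by
  simpa using convex_univ.norm_image_sub_le_of_norm_hasFDerivWithin_le
    (fun z _ => (hasFDerivAt_softmaxE z).hasFDerivWithinAt)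
    (fun z _ => norm_softmaxJacobian_softmaxE_le z) (Set.mem_univ u) (Set.mem_univ (u + v))
end

section
/- For any z in R^n, the Jacobian of softmax, ∇σ(z) = diag(σ(z)) − σ(z)σ(z)^⊤, has operator 2-norm at most 1/2. -/
/-- The Jacobian of softmax: `diag(σ(z)) − σ(z)σ(z)ᵀ`. -/
noncomputable def softmaxJac {n : ℕ} (z : Fin n → ℝ) : Matrix (Fin n) (Fin n) ℝ :=
  Matrix.diagonal (softmax z) - Matrix.of fun i j => softmax z i * softmax z j

open Finset
open scoped Matrix.Norms.L2Operator

namespace Matrix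

variable {𝕜 m n : Type*} [RCLike 𝕜] [Fintype m] [Fintype n]

theorem norm_dotProduct_sq_le (a x : n → 𝕜) :
    ‖a ⬝ᵥ x‖ ^ 2 ≤ (∑ j, ‖a j‖) * ∑ j, ‖a j‖ * ‖x j‖ ^ 2 := by
  have hnorm : ‖a ⬝ᵥ x‖ ≤ ∑ j, ‖a j‖ * ‖x j‖ :=
    (norm_sum_le _ _).trans_eq (by simp only [norm_mul])
  calc ‖a ⬝ᵥ x‖ ^ 2 ≤ (∑ j, ‖a j‖ * ‖x j‖) ^ 2 := by gcongr
    _ ≤ (∑ j, ‖a j‖) * ∑ j, ‖a j‖ * ‖x j‖ ^ 2 :=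
      sum_sq_le_sum_mul_sum_of_sq_le_mul _ (fun _ _ => norm_nonneg _)
        (fun _ _ => by positivity) fun _ _ => le_of_eq (by ring)

theorem l2_opNorm_le_sqrt_mul [DecidableEq n] {A : Matrix m n 𝕜} {r c : ℝ} (hr : 0 ≤ r)
    (hrow : ∀ i, ∑ j, ‖A i j‖ ≤ r) (hcol : ∀ j, ∑ i, ‖A i j‖ ≤ c) :
    ‖A‖ ≤ √(r * c) := by
  refine ContinuousLinearMap.opNorm_le_bound _ (Real.sqrt_nonneg _) fun x => ?_
  rw [EuclideanSpace.norm_eq, EuclideanSpace.norm_eq, ← Real.sqrt_mul' _ (by positivity)]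
  gcongr
  calc ∑ i, ‖(A *ᵥ x.ofLp) i‖ ^ 2
      ≤ ∑ i, r * ∑ j, ‖A i j‖ * ‖x j‖ ^ 2 := by
        gcongr with i
        exact (norm_dotProduct_sq_le (A i) x.ofLp).trans (by gcongr; exact hrow i)
    _ = r * ∑ j, (∑ i, ‖A i j‖) * ‖x j‖ ^ 2 := by
        rw [← mul_sum, sum_comm]
        simp only [sum_mul]
    _ ≤ r * ∑ j, c * ‖x j‖ ^ 2 := by gcongr with j; exact hcol j
    _ = r * c * ∑ j, ‖x j‖ ^ 2 := by rw [← mul_sum, mul_assoc]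

end Matrix

section Softmax

variable {n : ℕ} (z : Fin n → ℝ)

theorem softmax_nonneg (i : Fin n) : 0 ≤ softmax z i := by
  unfold softmax
  positivity

theorem sum_softmax [Nonempty (Fin n)] : ∑ i, softmax z i = 1 := by
  unfold softmax
  rw [← sum_div, div_self (sum_pos (fun j _ => Real.exp_pos (z j)) univ_nonempty).ne']

theorem softmax_le_one (i : Fin n) : softmax z i ≤ 1 :=
  have : Nonempty (Fin n) := ⟨i⟩
  (single_le_sum (fun j _ => softmax_nonneg z j) (mem_univ i)).trans_eq (sum_softmax z)

theorem softmaxJac_apply_comm (i j : Fin n) : softmaxJac z i j = softmaxJac z j i := by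
  rcases eq_or_ne i j with rfl | h
  · rfl
  · simp [softmaxJac, Matrix.diagonal_apply_ne _ h, Matrix.diagonal_apply_ne' _ h, mul_comm]

theorem abs_softmaxJac_apply (i j : Fin n) :
    |softmaxJac z i j| =
      if i = j then softmax z i * (1 - softmax z i) else softmax z i * softmax z j := by
  have := softmax_nonneg z i
  split_ifs with h
  · subst h
    have := softmax_le_one z i
    simp only [softmaxJac, Matrix.sub_apply, Matrix.diagonal_apply_eq, Matrix.of_apply]
    rw [abs_of_nonneg (by nlinarith)]
    ring
  · simp [softmaxJac, Matrix.diagonal_apply_ne _ h, abs_mul, abs_of_nonneg, softmax_nonneg]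

theorem sum_abs_softmaxJac_apply (i : Fin n) :
    ∑ j, |softmaxJac z i j| = 2 * softmax z i * (1 - softmax z i) := by
  have : Nonempty (Fin n) := ⟨i⟩
  rw [← add_sum_erase _ _ (mem_univ i), abs_softmaxJac_apply, if_pos rfl,
    sum_congr rfl fun j hj => (abs_softmaxJac_apply z i j).trans (if_neg (ne_of_mem_erase hj).symm),
    ← mul_sum, sum_erase_eq_sub (mem_univ i), sum_softmax]
  ring

end Softmax

theorem softmaxJac_opNorm_le (n : ℕ) (z : Fin n → ℝ) :
    ‖Matrix.toEuclideanCLM (𝕜 := ℝ) (softmaxJac z)‖ ≤ 1 / 2 := by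
  have hrow (i : Fin n) : ∑ j, ‖softmaxJac z i j‖ ≤ 1 / 2 := by
    simp only [Real.norm_eq_abs, sum_abs_softmaxJac_apply]
    nlinarith [sq_nonneg (2 * softmax z i - 1)]
  have hcol (j : Fin n) : ∑ i, ‖softmaxJac z i j‖ ≤ 1 / 2 := by
    simpa only [softmaxJac_apply_comm z _ j] using hrow j
  rw [Matrix.l2_opNorm_toEuclideanCLM]
  calc ‖softmaxJac z‖ ≤ √(1 / 2 * (1 / 2)) := Matrix.l2_opNorm_le_sqrt_mul (by norm_num) hrow hcol
    _ = 1 / 2 := Real.sqrt_mul_self (by norm_num)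
end

section
/- Oracle dominance over replicator dynamics: let p : [0,∞) → R^n be continuous, let z(t) = z(0) + ∫₀ᵗ p(τ)dτ, and define x_R(t) = σ(z(t)) and x_OR(t) = σ(z(t) + p(t)). Then for every T ≥ 0, ∫₀ᵀ p(t)·x_OR(t) dt ≥ ∫₀ᵀ p(t)·x_R(t) dt. -/
open Finset Real

theorem Monovary.weighted_sum_mul_sum_le_sum_mul_sum {ι : Type*} [Fintype ι] {f g : ι → ℝ}
    (hfg : Monovary f g) (w : ι → ℝ) (hw : ∀ i, 0 ≤ w i) :
    (∑ i, w i * f i) * ∑ i, w i * g i ≤ (∑ i, w i) * ∑ i, w i * (f i * g i) := by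
  have hsymm : ∑ i, ∑ j, w i * w j * ((f j - f i) * (g j - g i))
      = 2 * ((∑ i, w i) * ∑ i, w i * (f i * g i) - (∑ i, w i * f i) * ∑ i, w i * g i) := by
    calc ∑ i, ∑ j, w i * w j * ((f j - f i) * (g j - g i))
        = ∑ i, ∑ j, (w i * (w j * (f j * g j)) + w j * (w i * (f i * g i))
            - w i * f i * (w j * g j) - w j * f j * (w i * g i)) := by
          congr! 2; ring
      _ = _ := by simp only [sum_add_distrib, sum_sub_distrib, ← sum_mul, ← mul_sum]; ring
  have hnonneg : 0 ≤ ∑ i, ∑ j, w i * w j * ((f j - f i) * (g j - g i)) :=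
    sum_nonneg fun i _ => sum_nonneg fun j _ =>
      mul_nonneg (mul_nonneg (hw i) (hw j)) (monovary_iff_forall_mul_nonneg.1 hfg i j)
  linarith

section Softmax

variable {n : ℕ}

theorem sum_mul_softmax (p z : Fin n → ℝ) :
    ∑ i, p i * softmax z i = (∑ i, exp (z i) * p i) / ∑ i, exp (z i) := by
  simp only [softmax, sum_div, mul_div_assoc', mul_comm]

theorem sum_mul_softmax_le_sum_mul_softmax_add (z p : Fin n → ℝ) :
    ∑ i, p i * softmax z i ≤ ∑ i, p i * softmax (z + p) i := by
  cases isEmpty_or_nonempty (Fin n)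
  · simp
  have hcheb := ((monovary_self p).comp_monotone_left exp_monotone)
    |>.weighted_sum_mul_sum_le_sum_mul_sum (fun i => exp (z i)) fun i => (exp_pos _).le
  simp only [sum_mul_softmax, Pi.add_apply, exp_add, mul_assoc]
  rw [div_le_div_iff₀ (by positivity) (by positivity)]
  simpa only [Function.comp_apply, mul_comm] using hcheb

@[fun_prop]
theorem continuous_softmax : Continuous (softmax : (Fin n → ℝ) → Fin n → ℝ) :=
  continuous_pi fun i => by
    have hden : ∀ v : Fin n → ℝ, ∑ j, exp (v j) ≠ 0 := fun v =>
      (sum_pos (fun j _ => exp_pos (v j)) ⟨i, mem_univ i⟩).ne'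
    unfold softmax
    fun_prop (disch := exact hden _)

end Softmax

theorem oracle_dominates_RD (n : ℕ) (p : ℝ → (Fin n → ℝ)) (hp : Continuous p)
    (z : ℝ → (Fin n → ℝ)) (z0 : Fin n → ℝ)
    (hz : ∀ t, z t = z0 + ∫ τ in (0:ℝ)..t, p τ)
    (T : ℝ) (hT : 0 ≤ T) :
    ∫ t in (0:ℝ)..T, ∑ i, p t i * softmax (z t) i ≤
      ∫ t in (0:ℝ)..T, ∑ i, p t i * softmax (z t + p t) i := by
  have hz_cont : Continuous z := by
    rw [funext hz]
    exact continuous_const.add <|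
      intervalIntegral.continuous_primitive (hp.intervalIntegrable · ·) 0
  have hR : Continuous fun t => ∑ i, p t i * softmax (z t) i := by fun_prop
  have hOR : Continuous fun t => ∑ i, p t i * softmax (z t + p t) i := by fun_prop
  exact intervalIntegral.integral_mono_on hT (hR.intervalIntegrable _ _)
    (hOR.intervalIntegrable _ _)
    fun t _ => sum_mul_softmax_le_sum_mul_softmax_add (z t) (p t)
end
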